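/- arXiv:2202.07809 — 2 statements merged into one kernel-verified Lean document; each statement's English description precedes it below -/
import Mathlib

section
/- Let g ≥ 2, and let H_1 : y² + q₁(x)y = p₁(x) and H_2 : y² + q₂(x)y = p₂(x) be hyperelliptic curves of genus g over F_2 in standard form with q_i monic. If H_1 and H_2 are isomorphic over F_2, then there exists A ∈ PGL_2(F_2) such that q₂(x) = ψ_{g+1}(A)(q₁(x)). -/
open Polynomial

noncomputable section

/-- The algebraic closure of F_2. -/
abbrev Kbar : Type := AlgebraicClosure (ZMod 2)

/-- ψ_n(A)(q) = (cx+d)^n q((ax+b)/(cx+d)) for A = [[a,b],[c,d]] over F_2, written out as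
Σ e_i (ax+b)^i (cx+d)^{n-i} for q = Σ e_i x^i of degree ≤ n. -/
def psi (n : ℕ) (A : Matrix (Fin 2) (Fin 2) (ZMod 2))
    (q : Polynomial (ZMod 2)) : Polynomial (ZMod 2) :=
  ∑ i ∈ Finset.range (n + 1),
    C (q.coeff i) * (C (A 0 0) * X + C (A 0 1)) ^ i * (C (A 1 0) * X + C (A 1 1)) ^ (n - i)

/-- The affine chart y² + Qy = P is nonsingular over F̄_2 (characteristic 2). -/
def SmoothChart (Q P : Polynomial (ZMod 2)) : Prop :=
  ∀ x y : Kbar,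
    ¬(y ^ 2 + (aeval x Q) * y + aeval x P = 0 ∧ aeval x Q = 0 ∧
      (aeval x (derivative Q)) * y + aeval x (derivative P) = 0)

/-- y² + qy = p defines a smooth (geometrically irreducible) hyperelliptic curve:
both charts of the standard projective model are nonsingular over F̄_2, and the cover
does not split over F̄_2. -/
def DefinesSmoothHyperelliptic (g : ℕ) (q p : Polynomial (ZMod 2)) : Prop :=
  SmoothChart q p ∧
  SmoothChart (reflect (g + 1) q) (reflect (2 * g + 2) p) ∧
  ¬∃ u : Polynomial Kbar,
      u ^ 2 + q.map (algebraMap (ZMod 2) Kbar) * u = p.map (algebraMap (ZMod 2) Kbar)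

abbrev F2 : Type := RatFunc (ZMod 2)

abbrev φ : Polynomial (ZMod 2) →+* F2 := algebraMap _ _

lemma phi_inj : Function.Injective (φ : Polynomial (ZMod 2) →+* F2) :=
  RatFunc.algebraMap_injective (ZMod 2)

lemma algC (c : ZMod 2) : algebraMap (ZMod 2) F2 c = φ (C c) := by
  rw [IsScalarTower.algebraMap_apply (ZMod 2) (Polynomial (ZMod 2)) F2, Polynomial.algebraMap_eq]

lemma lin_ne_zero {a b : ZMod 2} (h : ¬(a = 0 ∧ b = 0)) :
    (C a * X + C b : Polynomial (ZMod 2)) ≠ 0 := by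
  intro hc
  apply h
  constructor
  · have := congrArg (fun p => Polynomial.coeff p 1) hc; simpa using this
  · have := congrArg (fun p => Polynomial.coeff p 0) hc; simpa using this

lemma psi_natDegree_le (n : ℕ) (A : Matrix (Fin 2) (Fin 2) (ZMod 2))
    (q : Polynomial (ZMod 2)) : (psi n A q).natDegree ≤ n := by
  unfold psi
  refine Polynomial.natDegree_sum_le_of_forall_le _ _ ?_
  intro i hi
  simp only [Finset.mem_range] at hi
  have h1 : ((C (A 0 0) * X + C (A 0 1) : Polynomial (ZMod 2)) ^ i).natDegree ≤ i :=
    natDegree_pow_le.trans (by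
      have := natDegree_linear_le (a := A 0 0) (b := A 0 1)
      nlinarith)
  have h2 : ((C (A 1 0) * X + C (A 1 1) : Polynomial (ZMod 2)) ^ (n - i)).natDegree ≤ n - i :=
    natDegree_pow_le.trans (by
      have := natDegree_linear_le (a := A 1 0) (b := A 1 1)
      nlinarith)
  calc (C (q.coeff i) * (C (A 0 0) * X + C (A 0 1)) ^ i *
        (C (A 1 0) * X + C (A 1 1)) ^ (n - i)).natDegree
      ≤ (C (q.coeff i) * (C (A 0 0) * X + C (A 0 1)) ^ i).natDegree
          + ((C (A 1 0) * X + C (A 1 1)) ^ (n - i)).natDegree := natDegree_mul_le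
    _ ≤ ((C (q.coeff i)).natDegree + ((C (A 0 0) * X + C (A 0 1)) ^ i).natDegree)
          + ((C (A 1 0) * X + C (A 1 1)) ^ (n - i)).natDegree := by
          exact Nat.add_le_add_right natDegree_mul_le _
    _ ≤ (0 + i) + (n - i) := by
          exact Nat.add_le_add (Nat.add_le_add (le_of_eq (natDegree_C _)) h1) h2
    _ ≤ n := by omega

lemma phi_psi (n : ℕ) (A : Matrix (Fin 2) (Fin 2) (ZMod 2)) (q : Polynomial (ZMod 2)) :
    φ (psi n A q) = ∑ i ∈ Finset.range (n + 1),
      φ (C (q.coeff i)) * (φ (C (A 0 0) * X + C (A 0 1))) ^ i *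
        (φ (C (A 1 0) * X + C (A 1 1))) ^ (n - i) := by
  simp [psi, map_sum, map_mul, map_pow]

lemma psi_eval (n : ℕ) (A : Matrix (Fin 2) (Fin 2) (ZMod 2)) (q : Polynomial (ZMod 2))
    (hq : q.natDegree ≤ n) (hv : φ (C (A 1 0) * X + C (A 1 1)) ≠ 0) :
    φ (psi n A q) = (φ (C (A 1 0) * X + C (A 1 1))) ^ n *
      Polynomial.aeval (φ (C (A 0 0) * X + C (A 0 1)) / φ (C (A 1 0) * X + C (A 1 1))) q := by
  set u := φ (C (A 0 0) * X + C (A 0 1)) with hu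
  set v := φ (C (A 1 0) * X + C (A 1 1)) with hvdef
  rw [phi_psi, Polynomial.aeval_eq_sum_range' (Nat.lt_succ_of_le hq), Finset.mul_sum]
  refine Finset.sum_congr rfl ?_
  intro i hi
  simp only [Finset.mem_range] at hi
  obtain ⟨j, rfl⟩ : ∃ j, n = i + j := ⟨n - i, by omega⟩
  rw [Algebra.smul_def, algC]
  rw [show i + j - i = j by omega, pow_add]
  have key : (u / v) ^ i * v ^ i = u ^ i := by
    rw [div_pow, div_mul_cancel₀ _ (pow_ne_zero _ hv)]
  calc φ (C (q.coeff i)) * u ^ i * v ^ j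
      = φ (C (q.coeff i)) * ((u / v) ^ i * v ^ i) * v ^ j := by rw [key]
    _ = v ^ i * v ^ j * (φ (C (q.coeff i)) * (u / v) ^ i) := by ring

lemma psi_psi (n : ℕ) (A B : Matrix (Fin 2) (Fin 2) (ZMod 2))
    (hB : ¬(B 1 0 = 0 ∧ B 1 1 = 0)) (q : Polynomial (ZMod 2)) :
    psi n B (psi n A q) = psi n (A * B) q := by
  apply phi_inj
  have hv : φ (C (B 1 0) * X + C (B 1 1)) ≠ 0 :=
    (map_ne_zero_iff φ phi_inj).mpr (lin_ne_zero hB)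
  rw [psi_eval n B _ (psi_natDegree_le n A q) hv, phi_psi n (A * B) q]
  have hM00 : (A * B) 0 0 = A 0 0 * B 0 0 + A 0 1 * B 1 0 := by
    simp [Matrix.mul_apply, Fin.sum_univ_two]
  have hM01 : (A * B) 0 1 = A 0 0 * B 0 1 + A 0 1 * B 1 1 := by
    simp [Matrix.mul_apply, Fin.sum_univ_two]
  have hM10 : (A * B) 1 0 = A 1 0 * B 0 0 + A 1 1 * B 1 0 := by
    simp [Matrix.mul_apply, Fin.sum_univ_two]
  have hM11 : (A * B) 1 1 = A 1 0 * B 0 1 + A 1 1 * B 1 1 := by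
    simp [Matrix.mul_apply, Fin.sum_univ_two]
  rw [hM00, hM01, hM10, hM11]
  set u := φ (C (B 0 0) * X + C (B 0 1)) with hu
  set v := φ (C (B 1 0) * X + C (B 1 1)) with hvdef
  unfold psi
  rw [map_sum, Finset.mul_sum]
  refine Finset.sum_congr rfl ?_
  intro i hi
  simp only [Finset.mem_range] at hi
  obtain ⟨j, rfl⟩ : ∃ j, n = i + j := ⟨n - i, by omega⟩
  rw [show i + j - i = j by omega]
  have hU : φ (C (A 0 0 * B 0 0 + A 0 1 * B 1 0) * X + C (A 0 0 * B 0 1 + A 0 1 * B 1 1))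
      = φ (C (A 0 0)) * u + φ (C (A 0 1)) * v := by
    rw [hu, hvdef, ← map_mul, ← map_mul, ← map_add]
    congr 1
    simp only [Polynomial.C_add, Polynomial.C_mul]
    ring
  have hV : φ (C (A 1 0 * B 0 0 + A 1 1 * B 1 0) * X + C (A 1 0 * B 0 1 + A 1 1 * B 1 1))
      = φ (C (A 1 0)) * u + φ (C (A 1 1)) * v := by
    rw [hu, hvdef, ← map_mul, ← map_mul, ← map_add]
    congr 1
    simp only [Polynomial.C_add, Polynomial.C_mul]
    ring
  rw [hU, hV]
  simp only [map_mul, map_pow, map_add, aeval_C, aeval_X, algC]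
  have h1 : (φ (C (A 0 0)) * (u / v) + φ (C (A 0 1))) * v
      = φ (C (A 0 0)) * u + φ (C (A 0 1)) * v := by
    field_simp
  have h2 : (φ (C (A 1 0)) * (u / v) + φ (C (A 1 1))) * v
      = φ (C (A 1 0)) * u + φ (C (A 1 1)) * v := by
    field_simp
  rw [← h1, ← h2, mul_pow, mul_pow, pow_add]
  ring

lemma psi_one (n : ℕ) (q : Polynomial (ZMod 2)) (hq : q.natDegree ≤ n) :
    psi n 1 q = q := by
  unfold psi
  conv_rhs => rw [q.as_sum_range' (n + 1) (Nat.lt_succ_of_le hq)]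
  refine Finset.sum_congr rfl ?_
  intro i hi
  simp [Matrix.one_apply, C_mul_X_pow_eq_monomial]

lemma row_ne (M : Matrix.GeneralLinearGroup (Fin 2) (ZMod 2)) :
    ¬((M : Matrix (Fin 2) (Fin 2) (ZMod 2)) 1 0 = 0 ∧
      (M : Matrix (Fin 2) (Fin 2) (ZMod 2)) 1 1 = 0) := by
  rintro ⟨h0, h1⟩
  have hu : IsUnit (M : Matrix (Fin 2) (Fin 2) (ZMod 2)) := Units.isUnit M
  have hd : IsUnit (M : Matrix (Fin 2) (Fin 2) (ZMod 2)).det :=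
    (Matrix.isUnit_iff_isUnit_det _).mp hu
  rw [Matrix.det_fin_two, h0, h1] at hd
  simp at hd


/-- Xarles, Lemma 1: let g ≥ 2 and H₁ : y² + q₁(x)y = p₁(x),
H₂ : y² + q₂(x)y = p₂(x) be hyperelliptic curves of genus g over F_2 in standard form
(2g+1 ≤ max{2 deg qᵢ, deg pᵢ} ≤ 2g+2) with qᵢ monic. If H₁ ≅ H₂ over F_2 — i.e. there is
an isomorphism (x,y) ↦ ((ax+b)/(cx+d), (r(x)+y)/(cx+d)^{g+1}) with [[a,b],[c,d]] ∈
PGL_2(F_2) and deg r ≤ g+1, which on equations means q₁ = ψ_{g+1}(A)(q₂) and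
p₁ = r² + ψ_{g+1}(A)(q₂)·r + ψ_{2g+2}(A)(p₂) — then there exists A ∈ PGL_2(F_2) with
q₂ = ψ_{g+1}(A)(q₁). -/
theorem stmt_1 (g : ℕ) (hg : 2 ≤ g) (q₁ p₁ q₂ p₂ : Polynomial (ZMod 2))
    (hm₁ : q₁.Monic) (hm₂ : q₂.Monic)
    (hw₁ : 2 * g + 1 ≤ max (2 * q₁.natDegree) p₁.natDegree)
    (hw₁' : max (2 * q₁.natDegree) p₁.natDegree ≤ 2 * g + 2)
    (hw₂ : 2 * g + 1 ≤ max (2 * q₂.natDegree) p₂.natDegree)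
    (hw₂' : max (2 * q₂.natDegree) p₂.natDegree ≤ 2 * g + 2)
    (hc₁ : DefinesSmoothHyperelliptic g q₁ p₁)
    (hc₂ : DefinesSmoothHyperelliptic g q₂ p₂)
    (hiso : ∃ (A : Matrix.GeneralLinearGroup (Fin 2) (ZMod 2)) (r : Polynomial (ZMod 2)),
        r.natDegree ≤ g + 1 ∧
        q₁ = psi (g + 1) (A : Matrix (Fin 2) (Fin 2) (ZMod 2)) q₂ ∧
        p₁ = r ^ 2 + psi (g + 1) (A : Matrix (Fin 2) (Fin 2) (ZMod 2)) q₂ * r +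
          psi (2 * g + 2) (A : Matrix (Fin 2) (Fin 2) (ZMod 2)) p₂) :
    ∃ A : Matrix.GeneralLinearGroup (Fin 2) (ZMod 2),
      q₂ = psi (g + 1) (A : Matrix (Fin 2) (Fin 2) (ZMod 2)) q₁ := by
  obtain ⟨A, r, hr, hq, hp⟩ := hiso
  refine ⟨A⁻¹, ?_⟩
  have hdeg : q₂.natDegree ≤ g + 1 := by
    have h := le_trans (le_max_left (2 * q₂.natDegree) p₂.natDegree) hw₂'
    omega
  rw [hq, psi_psi _ _ _ (row_ne A⁻¹)]
  have hAA : (A : Matrix (Fin 2) (Fin 2) (ZMod 2)) *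
      ((A⁻¹ : Matrix.GeneralLinearGroup (Fin 2) (ZMod 2)) : Matrix (Fin 2) (Fin 2) (ZMod 2))
      = 1 := Units.mul_inv A
  rw [hAA, psi_one _ _ hdeg]

end
end

section
/- Let g ≥ 2, let q(x) ∈ F_2[x] be nonzero and p(x) ∈ F_2[x] with 2g+1 ≤ max{2 deg q, deg p} ≤ 2g+2. Then the equation y² + q(x)y = p(x) defines a smooth hyperelliptic curve of genus g over F_2 if and only if gcd(q(x), p'(x)² + q'(x)² p(x)) = 1, and either deg q = g+1 or a_{2g+1}² ≠ a_{2g+2} b_g², where p(x) = Σ_{i=0}^{2g+2} a_i x^i and q(x) = Σ_{i=0}^{g+1} b_i x^i. -/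
open Polynomial

noncomputable section

lemma zmod2_two : (2 : ZMod 2) = 0 := rfl

lemma kbar_sq_inj {a b : Kbar} (h : a ^ 2 = b ^ 2) : a = b :=
  frobenius_inj Kbar 2 (by simpa [frobenius_def] using h)

lemma exists_sqrt (a : Kbar) : ∃ y : Kbar, y ^ 2 = a :=
  IsAlgClosed.exists_pow_nat_eq a two_pos

lemma kbar_two_eq_zero : (2 : Kbar) = 0 := by
  exact_mod_cast CharP.cast_eq_zero Kbar 2

lemma coprime_iff_no_common_root (A B : Polynomial (ZMod 2)) (hA : A ≠ 0) :
    IsCoprime A B ↔ ∀ x : Kbar, ¬(aeval x A = 0 ∧ aeval x B = 0) := by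
  constructor
  · rintro ⟨u, v, huv⟩ x ⟨h1, h2⟩
    have := congrArg (aeval x) huv
    simp [h1, h2] at this
  · intro h
    classical
    by_contra hc
    have hgcd : ¬ IsUnit (EuclideanDomain.gcd A B) := fun hu =>
      hc (EuclideanDomain.gcd_isUnit_iff.mp hu)
    have hg0 : EuclideanDomain.gcd A B ≠ 0 := fun h0 =>
      hA (EuclideanDomain.gcd_eq_zero_iff.mp h0).1
    have hdeg : (EuclideanDomain.gcd A B).degree ≠ 0 := by
      intro h0
      exact hgcd (isUnit_iff_degree_eq_zero.mpr h0)
    have hdeg' : ((EuclideanDomain.gcd A B).map (algebraMap (ZMod 2) Kbar)).degree ≠ 0 := by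
      rwa [degree_map_eq_of_injective (algebraMap (ZMod 2) Kbar).injective]
    obtain ⟨x, hx⟩ := IsAlgClosed.exists_root _ hdeg'
    have hxA : aeval x A = 0 := by
      obtain ⟨c, hcst⟩ := EuclideanDomain.gcd_dvd_left A B
      rw [hcst]
      have : aeval x (EuclideanDomain.gcd A B) = 0 := by
        rwa [IsRoot, eval_map, ← aeval_def] at hx
      simp [this]
    have hxB : aeval x B = 0 := by
      obtain ⟨c, hcst⟩ := EuclideanDomain.gcd_dvd_right A B
      rw [hcst]
      have : aeval x (EuclideanDomain.gcd A B) = 0 := by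
        rwa [IsRoot, eval_map, ← aeval_def] at hx
      simp [this]
    exact h x ⟨hxA, hxB⟩

lemma reflect_deriv (f : Polynomial (ZMod 2)) (N : ℕ) (hf : f.natDegree ≤ N) :
    X * derivative (reflect N f) =
      C (N : ZMod 2) * reflect N f + reflect (N - 1) (derivative f) := by
  have h2 : (2 : ZMod 2) = 0 := rfl
  ext n
  rcases n with _ | n
  · simp only [mul_coeff_zero, coeff_X_zero, zero_mul, coeff_add, coeff_C_mul, coeff_reflect]
    rcases Nat.eq_zero_or_pos N with rfl | hN
    · simp only [revAt, Function.Embedding.coeFn_mk]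
      norm_num
      rw [coeff_derivative]
      have : f.coeff 1 = 0 := coeff_eq_zero_of_natDegree_lt (by omega)
      simp [this]
    · rw [revAt_le (Nat.zero_le N), revAt_le (Nat.zero_le (N-1)), Nat.sub_zero, Nat.sub_zero,
        coeff_derivative]
      have hN1 : N - 1 + 1 = N := by omega
      have hcast : ((N - 1 : ℕ) : ZMod 2) + 1 = (N : ZMod 2) := by
        have := congrArg (Nat.cast (R := ZMod 2)) hN1
        push_cast at this
        exact this
      rw [hN1, hcast, coeff_C_zero]
      linear_combination (-(N : ZMod 2) * f.coeff N) * h2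
  · rw [coeff_X_mul, coeff_derivative, coeff_reflect, coeff_add, coeff_C_mul, coeff_reflect,
      coeff_reflect, coeff_derivative]
    rcases le_or_gt (n + 2) N with hc | hc
    · obtain ⟨k, rfl⟩ : ∃ k, N = n + 2 + k := ⟨N - (n + 2), by omega⟩
      rw [revAt_le (by omega : n + 1 ≤ n + 2 + k), revAt_le (by omega : n + 1 ≤ n + 2 + k - 1)]
      have e1 : n + 2 + k - (n + 1) = k + 1 := by omega
      have e2 : n + 2 + k - 1 - (n + 1) = k := by omega
      rw [e1, e2]
      push_cast
      linear_combination (-(f.coeff (k + 1)) * (1 + (k : ZMod 2))) * h2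
    · rcases le_or_gt (n + 1) N with hc2 | hc2
      · -- n + 1 = N
        have hN : N = n + 1 := by omega
        subst hN
        rw [revAt_le (le_refl (n+1)), Nat.sub_self,
          revAt_eq_self_of_lt (by omega : n + 1 - 1 < n + 1)]
        have : f.coeff (n + 1 + 1) = 0 := coeff_eq_zero_of_natDegree_lt (by omega)
        rw [this]
        push_cast
        ring
      · rw [revAt_eq_self_of_lt hc2, revAt_eq_self_of_lt (by omega : N - 1 < n + 1)]
        have h1 : f.coeff (n + 1) = 0 := coeff_eq_zero_of_natDegree_lt (by omega)
        have h3 : f.coeff (n + 1 + 1) = 0 := coeff_eq_zero_of_natDegree_lt (by omega)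
        rw [h1, h3]
        ring

lemma aeval_reflect (f : Polynomial (ZMod 2)) (N : ℕ) (hf : f.natDegree ≤ N)
    (x : Kbar) (hx : x ≠ 0) :
    aeval x (reflect N f) = x ^ N * aeval x⁻¹ f := by
  haveI : Invertible (x⁻¹) := invertibleOfNonzero (inv_ne_zero hx)
  have h := eval₂_reflect_mul_pow (algebraMap (ZMod 2) Kbar) (x⁻¹) N f hf
  rw [invOf_eq_inv, inv_inv] at h
  rw [aeval_def, aeval_def, ← h, inv_pow]
  field_simp

lemma transfer (g : ℕ) (q p : Polynomial (ZMod 2)) (hdq : q.natDegree ≤ g + 1)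
    (hdp : p.natDegree ≤ 2 * g + 2) (x : Kbar) (hx : x ≠ 0)
    (h1 : aeval x (reflect (g + 1) q) = 0)
    (h2 : aeval x (derivative (reflect (2 * g + 2) p) ^ 2 +
      derivative (reflect (g + 1) q) ^ 2 * reflect (2 * g + 2) p) = 0) :
    aeval x⁻¹ q = 0 ∧
      aeval x⁻¹ (derivative p ^ 2 + derivative q ^ 2 * p) = 0 := by
  have hq0 : aeval x⁻¹ q = 0 := by
    have h := h1
    rw [aeval_reflect q (g + 1) hdq x hx] at h
    rcases mul_eq_zero.mp h with h | h
    · exact absurd h (pow_ne_zero _ hx)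
    · exact h
  refine ⟨hq0, ?_⟩
  have hrp := aeval_reflect p (2 * g + 2) hdp x hx
  have hdq' : (derivative q).natDegree ≤ g :=
    le_trans (natDegree_derivative_le q) (by omega)
  have hdp' : (derivative p).natDegree ≤ 2 * g + 1 :=
    le_trans (natDegree_derivative_le p) (by omega)
  have hrq' := aeval_reflect (derivative q) g hdq' x hx
  have hrp' := aeval_reflect (derivative p) (2 * g + 1) hdp' x hx
  have idq := congrArg (aeval x) (reflect_deriv q (g + 1) hdq)
  simp only [map_add, map_mul, aeval_X, aeval_C] at idq
  have eg : g + 1 - 1 = g := by omega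
  rw [eg, h1, mul_zero, zero_add, hrq'] at idq
  have idp := congrArg (aeval x) (reflect_deriv p (2 * g + 2) hdp)
  simp only [map_add, map_mul, aeval_X, aeval_C] at idp
  have hc2 : ((2 * g + 2 : ℕ) : ZMod 2) = 0 := by
    push_cast
    linear_combination ((g : ZMod 2) + 1) * zmod2_two
  have eg2 : 2 * g + 2 - 1 = 2 * g + 1 := by omega
  rw [hc2, map_zero, zero_mul, zero_add, eg2, hrp'] at idp
  simp only [map_add, map_pow, map_mul] at h2 ⊢
  have h2K : (2 : Kbar) = 0 := by exact_mod_cast CharP.cast_eq_zero Kbar 2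
  have key : x ^ (4 * g + 2) *
      (aeval x⁻¹ (derivative p) ^ 2 +
        aeval x⁻¹ (derivative q) ^ 2 * aeval x⁻¹ p) = 0 := by
    linear_combination (x ^ 2) * h2 -
      (x * aeval x (derivative (reflect (2 * g + 2) p)) +
        x ^ (2 * g + 1) * aeval x⁻¹ (derivative p)) * idp -
      (x * aeval x (derivative (reflect (g + 1) q)) +
        x ^ g * aeval x⁻¹ (derivative q)) * aeval x (reflect (2 * g + 2) p) * idq +
      (x ^ (2 * g)) * aeval x⁻¹ (derivative q) ^ 2 * hrp +
      (x ^ 2 * x ^ (4 * g) * aeval x⁻¹ (derivative q) ^ 2 * aeval x⁻¹ p -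
        x ^ (2 * g) * aeval x⁻¹ (derivative q) ^ 2 *
          aeval x (reflect (2 * g + 2) p)) * h2K
  rcases mul_eq_zero.mp key with h | h
  · exact absurd h (pow_ne_zero _ hx)
  · exact h

lemma at_zero (g : ℕ) (q p : Polynomial (ZMod 2)) :
    (aeval (0 : Kbar) (reflect (g + 1) q) = 0 ∧
      aeval (0 : Kbar) (derivative (reflect (2 * g + 2) p) ^ 2 +
        derivative (reflect (g + 1) q) ^ 2 * reflect (2 * g + 2) p) = 0) ↔
    (q.coeff (g + 1) = 0 ∧
      (p.coeff (2 * g + 1)) ^ 2 = p.coeff (2 * g + 2) * (q.coeff g) ^ 2) := by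
  have haz : ∀ f : Polynomial (ZMod 2),
      aeval (0 : Kbar) f = algebraMap (ZMod 2) Kbar (f.coeff 0) := fun f => by
    rw [aeval_def, eval₂_at_zero]
  have hinj : Function.Injective (algebraMap (ZMod 2) Kbar) :=
    (algebraMap (ZMod 2) Kbar).injective
  have c1 : (derivative (reflect (2 * g + 2) p)).coeff 0 = p.coeff (2 * g + 1) := by
    rw [coeff_derivative, coeff_reflect, revAt_le (by omega : 0 + 1 ≤ 2 * g + 2)]
    have e : 2 * g + 2 - (0 + 1) = 2 * g + 1 := by omega
    rw [e]; push_cast; ring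
  have c2 : (derivative (reflect (g + 1) q)).coeff 0 = q.coeff g := by
    rw [coeff_derivative, coeff_reflect, revAt_le (by omega : 0 + 1 ≤ g + 1)]
    have e : g + 1 - (0 + 1) = g := by omega
    rw [e]; push_cast; ring
  have c3 : (reflect (2 * g + 2) p).coeff 0 = p.coeff (2 * g + 2) := by
    rw [coeff_reflect, revAt_le (Nat.zero_le _), Nat.sub_zero]
  have e1 : aeval (0 : Kbar) (reflect (g + 1) q) =
      algebraMap (ZMod 2) Kbar (q.coeff (g + 1)) := by
    rw [haz, coeff_reflect, revAt_le (Nat.zero_le _), Nat.sub_zero]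
  have e2 : aeval (0 : Kbar) (derivative (reflect (2 * g + 2) p) ^ 2 +
      derivative (reflect (g + 1) q) ^ 2 * reflect (2 * g + 2) p) =
      algebraMap (ZMod 2) Kbar
        ((p.coeff (2 * g + 1)) ^ 2 + (q.coeff g) ^ 2 * p.coeff (2 * g + 2)) := by
    simp only [map_add, map_pow, map_mul]
    rw [haz (derivative (reflect (2 * g + 2) p)), haz (derivative (reflect (g + 1) q)),
      haz (reflect (2 * g + 2) p), c1, c2, c3]
  rw [e1, e2, map_eq_zero_iff _ hinj, map_eq_zero_iff _ hinj]
  refine and_congr_right fun _ => ?_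
  have hz : ∀ u v w : ZMod 2, (u ^ 2 + v ^ 2 * w = 0 ↔ u ^ 2 = w * v ^ 2) := by decide
  exact hz _ _ _

lemma no_split (g : ℕ) (hg : 2 ≤ g) (q p : Polynomial (ZMod 2)) (hq : q ≠ 0)
    (hlow : 2 * g + 1 ≤ max (2 * q.natDegree) p.natDegree)
    (hhigh : max (2 * q.natDegree) p.natDegree ≤ 2 * g + 2)
    (hco : IsCoprime q (derivative p ^ 2 + derivative q ^ 2 * p))
    (hdeg : q.natDegree = g + 1 ∨
      (p.coeff (2 * g + 1)) ^ 2 ≠ p.coeff (2 * g + 2) * (q.coeff g) ^ 2) :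
    ¬∃ u : Polynomial Kbar,
      u ^ 2 + q.map (algebraMap (ZMod 2) Kbar) * u = p.map (algebraMap (ZMod 2) Kbar) := by
  rintro ⟨u, hu⟩
  set φ := algebraMap (ZMod 2) Kbar with hφ
  have h2P : (2 : Polynomial Kbar) = 0 := by
    exact_mod_cast CharP.cast_eq_zero (Polynomial Kbar) 2
  have hC2 : (C (2 : Kbar) : Polynomial Kbar) = 0 := by
    rw [show (2 : Kbar) = 0 by exact_mod_cast CharP.cast_eq_zero Kbar 2, map_zero]
  have hder : map φ (derivative p) =
      map φ (derivative q) * u + map φ q * derivative u := by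
    have h := congrArg derivative hu
    rw [derivative_add, derivative_mul, derivative_pow] at h
    norm_num [hC2] at h
    linear_combination h + (map φ (derivative p) - map φ (derivative q) * u -
      map φ q * derivative u) * h2P
  have key : map φ (derivative p) ^ 2 + map φ (derivative q) ^ 2 * map φ p =
      map φ q * (map φ q * derivative u ^ 2 + map φ (derivative q) ^ 2 * u) := by
    rw [hder, ← hu]
    linear_combination (map φ (derivative q) ^ 2 * u ^ 2 +
      map φ q * map φ (derivative q) * u * derivative u) * h2P
  have hdvd : q ∣ derivative p ^ 2 + derivative q ^ 2 * p := by
    rw [← map_dvd_map' φ]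
    simp only [Polynomial.map_add, Polynomial.map_mul, Polynomial.map_pow]
    exact ⟨_, key⟩
  have hunit : IsUnit q := hco.isUnit_of_dvd' dvd_rfl hdvd
  have hq0 : q.natDegree = 0 := natDegree_eq_zero_of_isUnit hunit
  have hq1 : q = 1 := by
    have hC := eq_C_of_natDegree_eq_zero hq0
    have hc : q.coeff 0 ≠ 0 := fun h => hq (by rw [hC, h, map_zero])
    have h1 : q.coeff 0 = 1 := by revert hc; generalize q.coeff 0 = a; revert a; decide
    rw [hC, h1, map_one]
  have hdp : p.natDegree ≤ 2 * g + 2 := le_trans (le_max_right _ _) hhigh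
  have hplow : 2 * g + 1 ≤ p.natDegree := by
    rw [hq0] at hlow; simpa using hlow
  have hqb1 : q.map φ = 1 := by rw [hq1, Polynomial.map_one]
  rw [hqb1, one_mul] at hu
  have hpbdeg : (p.map φ).natDegree = p.natDegree :=
    natDegree_map_eq_of_injective φ.injective p
  have hun : u.natDegree ≠ 0 := by
    intro h0
    have hle : (u ^ 2 + u).natDegree ≤ 0 :=
      le_trans (natDegree_add_le _ _) (by simp [natDegree_pow, h0])
    rw [hu, hpbdeg] at hle; omega
  have hdeq : (p.map φ).natDegree = 2 * u.natDegree := by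
    rw [← hu]
    have hlt : u.natDegree < (u ^ 2).natDegree := by rw [natDegree_pow]; omega
    rw [natDegree_add_eq_left_of_natDegree_lt hlt, natDegree_pow]
  have hudeg : u.natDegree = g + 1 := by omega
  have hu2 : (u ^ 2).coeff (2 * g + 1) = 0 := by
    rw [← Polynomial.map_frobenius_expand, coeff_map,
      Polynomial.coeff_expand (by norm_num : 0 < 2)]
    have hnd : ¬(2 ∣ 2 * g + 1) := by omega
    simp [hnd]
  have hcontra : (p.map φ).coeff (2 * g + 1) = 0 := by
    rw [← hu, coeff_add, hu2,
      coeff_eq_zero_of_natDegree_lt (by omega : u.natDegree < 2 * g + 1), add_zero]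
  have hpc : p.coeff (2 * g + 1) = 0 := by
    rw [coeff_map] at hcontra
    exact (map_eq_zero_iff φ φ.injective).mp hcontra
  rcases hdeg with h | h
  · omega
  · apply h
    have hbg : q.coeff g = 0 := by
      rw [hq1, coeff_one]
      simp only [if_neg (by omega : ¬g = 0)]
    rw [hpc, hbg]
    ring

lemma smoothChart_iff (Q P : Polynomial (ZMod 2)) :
    SmoothChart Q P ↔
      ∀ x : Kbar, ¬(aeval x Q = 0 ∧
        aeval x (derivative P ^ 2 + derivative Q ^ 2 * P) = 0) := by
  have h2 : (2 : Kbar) = 0 := kbar_two_eq_zero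
  constructor
  · intro hs x ⟨hQ, hF⟩
    obtain ⟨y, hy⟩ := exists_sqrt (aeval x P)
    refine hs x y ⟨?_, hQ, ?_⟩
    · rw [hQ]; linear_combination hy + aeval x P * h2
    · have : (aeval x (derivative Q) * y + aeval x (derivative P)) ^ 2 = 0 := by
        have expand : (aeval x (derivative Q) * y + aeval x (derivative P)) ^ 2 =
            aeval x (derivative P) ^ 2 + aeval x (derivative Q) ^ 2 * aeval x P +
            2 * (aeval x (derivative Q) * y * aeval x (derivative P)) := by
          rw [← hy]; ring
        rw [expand, h2]
        simpa using hF
      exact (pow_eq_zero_iff (by norm_num : (2:ℕ) ≠ 0)).mp this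
  · intro hs x y ⟨h1, hQ, h3⟩
    refine hs x ⟨hQ, ?_⟩
    have hy : y ^ 2 = aeval x P := by
      have := h1; rw [hQ] at this
      have h4 : y ^ 2 + aeval x P = 0 := by linear_combination this
      linear_combination h4 - aeval x P * h2
    simp only [map_add, map_pow, map_mul]
    linear_combination (aeval x (derivative P) - aeval x (derivative Q) * y) * h3 +
      (aeval x (derivative Q)) ^ 2 * hy +
      (aeval x (derivative Q)) ^ 2 * (aeval x P) * h2

/-- Xarles, Lemma 5: for g ≥ 2, q ≠ 0 and 2g+1 ≤ max{2 deg q, deg p} ≤ 2g+2,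
the equation y² + q(x)y = p(x) defines a smooth hyperelliptic curve of genus g over F_2 if
and only if gcd(q, p'² + q'²p) = 1 and either deg q = g+1 or a_{2g+1}² ≠ a_{2g+2}·b_g²,
where a_i, b_i are the coefficients of p and q. -/
theorem stmt_2 (g : ℕ) (hg : 2 ≤ g) (q p : Polynomial (ZMod 2)) (hq : q ≠ 0)
    (hlow : 2 * g + 1 ≤ max (2 * q.natDegree) p.natDegree)
    (hhigh : max (2 * q.natDegree) p.natDegree ≤ 2 * g + 2) :
    DefinesSmoothHyperelliptic g q p ↔
      (IsCoprime q (derivative p ^ 2 + derivative q ^ 2 * p) ∧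
        (q.natDegree = g + 1 ∨
          (p.coeff (2 * g + 1)) ^ 2 ≠ p.coeff (2 * g + 2) * (q.coeff g) ^ 2)) := by
  have hdq : q.natDegree ≤ g + 1 := by
    have := le_trans (le_max_left (2 * q.natDegree) p.natDegree) hhigh; omega
  have hdp : p.natDegree ≤ 2 * g + 2 := le_trans (le_max_right _ _) hhigh
  have htop : q.coeff (g + 1) = 0 ↔ q.natDegree ≠ g + 1 := by
    constructor
    · intro h h'
      exact leadingCoeff_ne_zero.mpr hq (by rwa [leadingCoeff, h'])
    · intro h
      by_contra hc
      exact h (le_antisymm hdq (le_natDegree_of_ne_zero hc))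
  constructor
  · rintro ⟨h1, h2, _⟩
    refine ⟨?_, ?_⟩
    · rw [coprime_iff_no_common_root _ _ hq]
      exact (smoothChart_iff q p).mp h1
    · have hz := (smoothChart_iff _ _).mp h2 0
      by_cases hd : q.natDegree = g + 1
      · exact Or.inl hd
      · exact Or.inr fun heq => hz ((at_zero g q p).mpr ⟨htop.mpr hd, heq⟩)
  · rintro ⟨hco, hdeg⟩
    refine ⟨?_, ?_, ?_⟩
    · rw [smoothChart_iff]
      exact (coprime_iff_no_common_root _ _ hq).mp hco
    · rw [smoothChart_iff]
      rintro x ⟨hx1, hx2⟩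
      by_cases hx0 : x = 0
      · subst hx0
        obtain ⟨hcz, heq⟩ := (at_zero g q p).mp ⟨hx1, hx2⟩
        rcases hdeg with h | h
        · exact htop.mp hcz h
        · exact h heq
      · obtain ⟨ha, hb⟩ := transfer g q p hdq hdp x hx0 hx1 hx2
        exact (coprime_iff_no_common_root _ _ hq).mp hco x⁻¹ ⟨ha, hb⟩
    · exact no_split g hg q p hq hlow hhigh hco hdeg

end
end
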